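/- arXiv:1712.01030 — 3 statements merged into one kernel-verified Lean document; each statement's English description precedes it below -/
import Mathlib

section
/- The box P(a,b,c|x,y,z) = 1/2 if (1 ⊕ b ⊕ c ⊕ y)(1 ⊕ a ⊕ b ⊕ x) = 1 and 0 otherwise satisfies all four families of relativistic causal constraints: (i) Σ_a P(a,b,c|x,y,z) is independent of x; (ii) Σ_c P(a,b,c|x,y,z) is independent of z; (iii) Σ_{b,c} P(a,b,c|x,y,z) is independent of (y,z); (iv) Σ_{a,b} P(a,b,c|x,y,z) is independent of (x,y). -/
noncomputable def gyniBox (a b c x y z : ZMod 2) : ℝ :=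
  if (1 + b + c + y) * (1 + a + b + x) = 1 then 1 / 2 else 0

lemma sum_zmod2 (f : ZMod 2 → ℝ) : ∑ a : ZMod 2, f a = f 0 + f 1 :=
  Fin.sum_univ_two f

lemma aux1 (b c x y z : ZMod 2) :
    ∑ a : ZMod 2, gyniBox a b c x y z = if 1 + b + c + y = 1 then 1/2 else 0 := by
  rw [sum_zmod2]
  unfold gyniBox
  fin_cases b <;> fin_cases c <;> fin_cases x <;> fin_cases y <;>
    reduce_mod_char <;> norm_num <;> first | decide | (reduce_mod_char; norm_num) <;> simp (config := {decide := true})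

lemma aux3 (a x y z : ZMod 2) :
    ∑ b : ZMod 2, ∑ c : ZMod 2, gyniBox a b c x y z = 1/2 := by
  simp only [sum_zmod2]
  unfold gyniBox
  fin_cases a <;> fin_cases x <;> fin_cases y <;>
    reduce_mod_char <;> norm_num <;> first | decide | (reduce_mod_char; norm_num) <;> simp (config := {decide := true})

lemma aux4 (c x y z : ZMod 2) :
    ∑ a : ZMod 2, ∑ b : ZMod 2, gyniBox a b c x y z = 1/2 := by
  simp only [sum_zmod2]
  unfold gyniBox
  fin_cases c <;> fin_cases x <;> fin_cases y <;>
    reduce_mod_char <;> norm_num <;> first | decide | (reduce_mod_char; norm_num) <;> simp (config := {decide := true})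

/-- The GYNI box satisfies all four families of relativistic causal constraints. -/
theorem gyniBox_RC :
    (∀ b c x x' y z : ZMod 2,
      ∑ a : ZMod 2, gyniBox a b c x y z = ∑ a : ZMod 2, gyniBox a b c x' y z) ∧
    (∀ a b x y z z' : ZMod 2,
      ∑ c : ZMod 2, gyniBox a b c x y z = ∑ c : ZMod 2, gyniBox a b c x y z') ∧
    (∀ a x y y' z z' : ZMod 2,
      ∑ b : ZMod 2, ∑ c : ZMod 2, gyniBox a b c x y z =
        ∑ b : ZMod 2, ∑ c : ZMod 2, gyniBox a b c x y' z') ∧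
    (∀ c x x' y y' z : ZMod 2,
      ∑ a : ZMod 2, ∑ b : ZMod 2, gyniBox a b c x y z =
        ∑ a : ZMod 2, ∑ b : ZMod 2, gyniBox a b c x' y' z) := by
  refine ⟨fun b c x x' y z => by rw [aux1, aux1],
          fun a b x y z z' => rfl,
          fun a x y y' z z' => by rw [aux3, aux3],
          fun c x x' y y' z => by rw [aux4, aux4]⟩
end

section
/- Let d ≥ 1 and let π : I × I → Equiv.Perm (Fin d) be a family of permutations (one for each input pair). Define the tripartite box P(a,b,c|x,y,z) = 1/d if a = π(x,y)(b) and c = π(z,y)(b), and 0 otherwise. Then P is normalized and satisfies all four RC constraint families, and both the Alice-Bob marginal Σ_c P(a,b,c|x,y,z) and the Bob-Charlie marginal Σ_a P(a,b,c|x,y,z) assign probability 1 to the unique-game winning conditions a = π(x,y)(b) and c = π(z,y)(b) respectively. -/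
/-- The RC box associated to a unique game given by permutations `π (x,y)` of `Fin d`:
`P(a,b,c|x,y,z) = 1/d` if `a = π(x,y)(b)` and `c = π(z,y)(b)`, else `0`. -/
noncomputable def uniqueGameBox {I : Type*} (d : ℕ) (π : I × I → Equiv.Perm (Fin d))
    (a b c : Fin d) (x y z : I) : ℝ :=
  if a = π (x, y) b ∧ c = π (z, y) b then 1 / (d : ℝ) else 0


lemma ugb_sum_c {I : Type*} (d : ℕ) (π : I × I → Equiv.Perm (Fin d))
    (a b : Fin d) (x y z : I) :
    ∑ c, uniqueGameBox d π a b c x y z = if a = π (x, y) b then 1 / (d : ℝ) else 0 := by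
  simp [uniqueGameBox, ite_and, Finset.sum_ite_eq']

lemma ugb_sum_a {I : Type*} (d : ℕ) (π : I × I → Equiv.Perm (Fin d))
    (b c : Fin d) (x y z : I) :
    ∑ a, uniqueGameBox d π a b c x y z = if c = π (z, y) b then 1 / (d : ℝ) else 0 := by
  simp [uniqueGameBox, ite_and, Finset.sum_ite_eq']

lemma sum_ite_perm {d : ℕ} (e : Equiv.Perm (Fin d)) (a : Fin d) (r : ℝ) :
    ∑ b, (if a = e b then r else 0) = r := by
  have : ∀ b, (if a = e b then r else 0) = (if b = e.symm a then r else 0) := by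
    intro b
    congr 1
    simp [Equiv.eq_symm_apply, eq_comm]
  simp [this]

/-- The unique-game RC box is normalized, satisfies all four RC constraint families, and
both the A-B and B-C marginals assign probability 1 to the respective winning conditions,
so both pairs win the unique game with certainty. -/
theorem uniqueGameBox_properties (d : ℕ) (hd : 1 ≤ d) (I : Type*) [Fintype I]
    (π : I × I → Equiv.Perm (Fin d)) :
    (∀ x y z : I, ∑ a : Fin d, ∑ b : Fin d, ∑ c : Fin d,
        uniqueGameBox d π a b c x y z = 1) ∧
    (∀ (b c : Fin d) (x x' y z : I),
      ∑ a, uniqueGameBox d π a b c x y z = ∑ a, uniqueGameBox d π a b c x' y z) ∧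
    (∀ (a b : Fin d) (x y z z' : I),
      ∑ c, uniqueGameBox d π a b c x y z = ∑ c, uniqueGameBox d π a b c x y z') ∧
    (∀ (a : Fin d) (x y y' z z' : I),
      ∑ b, ∑ c, uniqueGameBox d π a b c x y z =
        ∑ b, ∑ c, uniqueGameBox d π a b c x y' z') ∧
    (∀ (c : Fin d) (x x' y y' z : I),
      ∑ a, ∑ b, uniqueGameBox d π a b c x y z =
        ∑ a, ∑ b, uniqueGameBox d π a b c x' y' z) ∧
    (∀ x y z : I,
      ∑ a : Fin d, ∑ b : Fin d,
        (if a = π (x, y) b then ∑ c, uniqueGameBox d π a b c x y z else 0) = 1) ∧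
    (∀ x y z : I,
      ∑ c : Fin d, ∑ b : Fin d,
        (if c = π (z, y) b then ∑ a, uniqueGameBox d π a b c x y z else 0) = 1) := by
  have hd' : (d : ℝ) ≠ 0 := Nat.cast_ne_zero.mpr (by omega)
  refine ⟨?_, ?_, ?_, ?_, ?_, ?_, ?_⟩
  · intro x y z
    simp [ugb_sum_c, sum_ite_perm, Finset.sum_const]
    field_simp
  · intro b c x x' y z
    simp [ugb_sum_a]
  · intro a b x y z z'
    simp [ugb_sum_c]
  · intro a x y y' z z'
    simp [ugb_sum_c, sum_ite_perm]
  · intro c x x' y y' z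
    have h : ∀ (x y z : I), ∑ a, ∑ b, uniqueGameBox d π a b c x y z = 1 / (d:ℝ) := by
      intro x y z
      rw [Finset.sum_comm]
      simp [ugb_sum_a, sum_ite_perm]
    rw [h, h]
  · intro x y z
    have : ∀ a b : Fin d, (if a = π (x, y) b then ∑ c, uniqueGameBox d π a b c x y z else 0)
        = if a = π (x, y) b then 1 / (d:ℝ) else 0 := by
      intro a b; rw [ugb_sum_c]; split <;> simp
    simp only [this]
    rw [Finset.sum_comm]
    simp [sum_ite_perm, Finset.sum_const]
    field_simp
  · intro x y z
    have : ∀ c b : Fin d, (if c = π (z, y) b then ∑ a, uniqueGameBox d π a b c x y z else 0)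
        = if c = π (z, y) b then 1 / (d:ℝ) else 0 := by
      intro c b; rw [ugb_sum_a]; split <;> simp
    simp only [this]
    rw [Finset.sum_comm]
    simp [sum_ite_perm, Finset.sum_const]
    field_simp
end

section
/- Let G be a bipartite Bell expression G(Q) = Σ_{a,b,x,y} α(a,b,x,y)·Q(a,b|x,y) with nonnegative coefficients, and suppose for each fixed y the restricted box Q(·,·|·,y) of an optimal no-signaling box Q is local (admits a deterministic hidden-variable decomposition). Then there exists a tripartite box P satisfying the four RC constraint families whose A-B marginal and C-B marginal both equal Q, so that both pairs A-B and B-C achieve the value G(Q) simultaneously. -/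
/-- Proposition 1: for any bipartite Bell expression `G` with nonnegative coefficients
and any no-signaling bipartite box `Q` whose single-`y` restrictions are local, there is
a tripartite box `P` satisfying the four RC constraint families whose A-B marginal and
C-B marginal both equal `Q`; hence both pairs A-B and B-C achieve the value `G(Q)`
simultaneously. -/
theorem no_monogamy_of_bipartite_Bell (I O : Type*) [Fintype I] [Fintype O]
    (α : O → O → I → I → ℝ) (hα : ∀ a b x y, 0 ≤ α a b x y)
    (Q : O → O → I → I → ℝ) (hQnn : ∀ a b x y, 0 ≤ Q a b x y)
    (hNSB : ∀ a x y y', ∑ b, Q a b x y = ∑ b, Q a b x y')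
    (hNSA : ∀ b x x' y, ∑ a, Q a b x y = ∑ a, Q a b x' y)
    (hloc : ∀ y : I, ∃ (k : ℕ) (p : Fin k → ℝ) (QA : O → I → Fin k → ℝ)
        (QB : O → Fin k → ℝ),
      (∀ l, 0 ≤ p l) ∧ (∑ l, p l = 1) ∧
      (∀ a x l, 0 ≤ QA a x l) ∧ (∀ x l, ∑ a, QA a x l = 1) ∧
      (∀ b l, 0 ≤ QB b l) ∧ (∀ l, ∑ b, QB b l = 1) ∧
      (∀ a b x, Q a b x y = ∑ l, p l * QA a x l * QB b l)) :
    ∃ P : O → O → O → I → I → I → ℝ,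
      (∀ a b c x y z, 0 ≤ P a b c x y z) ∧
      (∀ b c x x' y z, ∑ a, P a b c x y z = ∑ a, P a b c x' y z) ∧
      (∀ a b x y z z', ∑ c, P a b c x y z = ∑ c, P a b c x y z') ∧
      (∀ a x y y' z z',
        ∑ b, ∑ c, P a b c x y z = ∑ b, ∑ c, P a b c x y' z') ∧
      (∀ c x x' y y' z,
        ∑ a, ∑ b, P a b c x y z = ∑ a, ∑ b, P a b c x' y' z) ∧
      (∀ a b x y z, ∑ c, P a b c x y z = Q a b x y) ∧
      (∀ b c x y z, ∑ a, P a b c x y z = Q c b z y) ∧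
      (∀ z, ∑ a, ∑ b, ∑ x, ∑ y, α a b x y * (∑ c, P a b c x y z) =
        ∑ a, ∑ b, ∑ x, ∑ y, α a b x y * Q a b x y) ∧
      (∀ x, ∑ c, ∑ b, ∑ z, ∑ y, α c b z y * (∑ a, P a b c x y z) =
        ∑ a, ∑ b, ∑ x, ∑ y, α a b x y * Q a b x y) := by
  choose k p QA QB hp hps hQA hQAs hQB hQBs hdec using hloc
  set P : O → O → O → I → I → I → ℝ :=
    fun a b c x y z => ∑ l, p y l * QA y a x l * (QB y b l * QA y c z l) with hP
  have hsumC : ∀ a b x y z, ∑ c, P a b c x y z = Q a b x y := by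
    intro a b x y z
    rw [hdec y a b x, hP]
    rw [Finset.sum_comm]
    refine Finset.sum_congr rfl fun l _ => ?_
    rw [← Finset.mul_sum, ← Finset.mul_sum, hQAs, mul_one, mul_assoc]
  have hsumA : ∀ b c x y z, ∑ a, P a b c x y z = Q c b z y := by
    intro b c x y z
    rw [hdec y c b z, hP]
    rw [Finset.sum_comm]
    refine Finset.sum_congr rfl fun l _ => ?_
    have : ∑ a, p y l * QA y a x l * (QB y b l * QA y c z l)
        = (∑ a, QA y a x l) * (p y l * (QB y b l * QA y c z l)) := by
      rw [Finset.sum_mul]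
      exact Finset.sum_congr rfl fun a _ => by ring
    rw [this, hQAs, one_mul]; ring
  refine ⟨P, ?_, ?_, ?_, ?_, ?_, hsumC, hsumA, ?_, ?_⟩
  · intro a b c x y z
    exact Finset.sum_nonneg fun l _ => by
      have := hp y l; have := hQA y a x l; have := hQB y b l; have := hQA y c z l
      positivity
  · intro b c x x' y z
    rw [hsumA, hsumA]
  · intro a b x y z z'
    rw [hsumC, hsumC]
  · intro a x y y' z z'
    simp only [hsumC]
    exact hNSB a x y y'
  · intro c x x' y y' z
    rw [Finset.sum_comm]
    conv_rhs => rw [Finset.sum_comm]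
    simp only [hsumA]
    exact hNSB c z y y'
  · intro z
    simp only [hsumC]
  · intro x
    simp only [hsumA]
end
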